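/- (Semigroup property) For all z, z' ∈ ℝ one has T_z ∘ T_{z'} = T_{z+z'} as maps on C([0,t];ℝ); in particular T_z ∘ T_{−z} = T_0 = Id for every z ∈ ℝ, where Id is the identity map on C([0,t];ℝ). -/

import Mathlib

open MeasureTheory ProbabilityTheory Set

/-- `A_s(φ) = ∫_0^s e^{2 φ_u} du`. -/
noncomputable def pA (φ : ℝ → ℝ) (s : ℝ) : ℝ := ∫ u in (0:ℝ)..s, Real.exp (2 * φ u)

/-- `Z_s(φ) = e^{-φ_s} A_s(φ)`. -/
noncomputable def pZ (φ : ℝ → ℝ) (s : ℝ) : ℝ := Real.exp (-(φ s)) * pA φ s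

/-- The anticipative transformation `T_z` on paths over `[0,t]`:
`T_z(φ)(s) = φ_s - log(1 + (A_s(φ)/A_t(φ)) (e^z - 1))`. -/
noncomputable def pT (t z : ℝ) (φ : ℝ → ℝ) (s : ℝ) : ℝ :=
  φ s - Real.log (1 + (pA φ s / pA φ t) * (Real.exp z - 1))

/-!
With `r = A_s/A_t ∈ [0,1]` and `D_z = 1 + r (e^z - 1) > 0` we have `T_z φ = φ - log D_z`, so
`e^{2 T_z φ} = e^{2φ} / D_z²`, which is the derivative of `A/D_z` because `D_z` is affine in `A`.
Hence `A_s(T_z φ) = A_s / D_z(s)`, in particular `A_t(T_z φ) = e^{-z} A_t`, and the new ratio is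
`r e^{z'} / D_{z'}`. Then `1 + r e^{z'} (e^z - 1) / D_{z'} = D_{z+z'} / D_{z'}`, and
`T_z T_{z'} φ = φ - log D_{z'} - log (D_{z+z'} / D_{z'}) = T_{z+z'} φ`.
-/

open Real

theorem one_add_mul_exp_sub_one_pos {r : ℝ} (h0 : 0 ≤ r) (h1 : r ≤ 1) (w : ℝ) :
    0 < 1 + r * (exp w - 1) := by
  nlinarith [mul_nonneg h0 (exp_pos w).le, mul_nonneg (sub_nonneg.2 h1) (exp_pos w).le,
    exp_pos w]

theorem exp_two_mul_sub_log {x D : ℝ} (hD : 0 < D) :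
    exp (2 * (x - log D)) = exp (2 * x) / D ^ 2 := by
  rw [mul_sub, exp_sub, mul_comm, ← log_rpow hD, exp_log (rpow_pos_of_pos hD 2), rpow_two]

theorem integral_div_one_add_mul_sq {A f : ℝ → ℝ} {a b c : ℝ} (hab : a ≤ b)
    (hA : ContinuousOn A (Icc a b)) (hf : ContinuousOn f (Icc a b))
    (hderiv : ∀ x ∈ Ioo a b, HasDerivAt A (f x) x) (hD : ∀ x ∈ Icc a b, 1 + c * A x ≠ 0) :
    ∫ x in a..b, f x / (1 + c * A x) ^ 2 = A b / (1 + c * A b) - A a / (1 + c * A a) := by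
  have hDcont : ContinuousOn (fun x => 1 + c * A x) (Icc a b) :=
    continuousOn_const.add (continuousOn_const.mul hA)
  refine intervalIntegral.integral_eq_sub_of_hasDerivAt_of_le hab (hA.div hDcont hD)
    (fun x hx => ?_) ?_
  · have hDx := hD x (Ioo_subset_Icc_self hx)
    convert (hderiv x hx).div (((hderiv x hx).const_mul c).const_add 1) hDx using 1
    congr 1
    ring
  · exact (hf.div (hDcont.pow 2) fun x hx => pow_ne_zero 2 (hD x hx)).intervalIntegrable_of_Icc hab

theorem pT_zero (t : ℝ) (φ : ℝ → ℝ) : pT t 0 φ = φ := by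
  funext s
  simp [pT]

section pA

variable {t : ℝ} {φ : ℝ → ℝ}

theorem pA_zero (φ : ℝ → ℝ) : pA φ 0 = 0 :=
  intervalIntegral.integral_same

theorem continuousOn_exp_two_mul (hφ : ContinuousOn φ (Icc 0 t)) :
    ContinuousOn (fun u => exp (2 * φ u)) (Icc 0 t) :=
  continuous_exp.comp_continuousOn (continuousOn_const.mul hφ)

theorem continuousOn_pA (ht : 0 ≤ t) (hφ : ContinuousOn φ (Icc 0 t)) :
    ContinuousOn (pA φ) (Icc 0 t) := by
  have := intervalIntegral.continuousOn_primitive_interval (μ := volume) (a := 0) (b := t)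
    (by rw [uIcc_of_le ht]; exact (continuousOn_exp_two_mul hφ).integrableOn_Icc)
  rwa [uIcc_of_le ht] at this

theorem hasDerivAt_pA (hφ : ContinuousOn φ (Icc 0 t)) {x : ℝ} (hx : x ∈ Ioo 0 t) :
    HasDerivAt (pA φ) (exp (2 * φ x)) x :=
  intervalIntegral.integral_hasDerivAt_right
    (((continuousOn_exp_two_mul hφ).mono
      (uIcc_subset_Icc (left_mem_Icc.2 (hx.1.trans hx.2).le) (Ioo_subset_Icc_self hx))
      ).intervalIntegrable)
    (((continuousOn_exp_two_mul hφ).mono Ioo_subset_Icc_self).stronglyMeasurableAtFilter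
      isOpen_Ioo x hx)
    ((continuousOn_exp_two_mul hφ x (Ioo_subset_Icc_self hx)).continuousAt
      (Icc_mem_nhds hx.1 hx.2))

theorem pA_pos (ht : 0 < t) (hφ : ContinuousOn φ (Icc 0 t)) : 0 < pA φ t :=
  intervalIntegral.intervalIntegral_pos_of_pos_on
    ((continuousOn_exp_two_mul hφ).intervalIntegrable_of_Icc ht.le) (fun _ _ => exp_pos _) ht

theorem pA_nonneg {s : ℝ} (hs : 0 ≤ s) : 0 ≤ pA φ s :=
  intervalIntegral.integral_nonneg hs fun _ _ => (exp_pos _).le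

theorem pA_le_pA (ht : 0 ≤ t) (hφ : ContinuousOn φ (Icc 0 t)) {s : ℝ} (hs : s ∈ Icc 0 t) :
    pA φ s ≤ pA φ t :=
  intervalIntegral.integral_mono_interval le_rfl hs.1 hs.2
    (Filter.Eventually.of_forall fun _ => (exp_pos _).le)
    ((continuousOn_exp_two_mul hφ).intervalIntegrable_of_Icc ht)

theorem one_add_div_pA_mul_pos (ht : 0 < t) (hφ : ContinuousOn φ (Icc 0 t)) {s : ℝ}
    (hs : s ∈ Icc 0 t) (w : ℝ) : 0 < 1 + pA φ s / pA φ t * (exp w - 1) :=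
  one_add_mul_exp_sub_one_pos (div_nonneg (pA_nonneg hs.1) (pA_pos ht hφ).le)
    ((div_le_one (pA_pos ht hφ)).2 (pA_le_pA ht.le hφ hs)) w

theorem pA_pT (ht : 0 < t) (hφ : ContinuousOn φ (Icc 0 t)) (z : ℝ) {s : ℝ} (hs : s ∈ Icc 0 t) :
    pA (pT t z φ) s = pA φ s / (1 + pA φ s / pA φ t * (exp z - 1)) := by
  set c := (exp z - 1) / pA φ t
  have hc : ∀ u, pA φ u / pA φ t * (exp z - 1) = c * pA φ u := fun u => by ring
  have hsub : Icc 0 s ⊆ Icc 0 t := Icc_subset_Icc_right hs.2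
  have hD : ∀ u ∈ Icc 0 t, 0 < 1 + c * pA φ u := fun u hu =>
    hc u ▸ one_add_div_pA_mul_pos ht hφ hu z
  calc pA (pT t z φ) s = ∫ u in (0:ℝ)..s, exp (2 * φ u) / (1 + c * pA φ u) ^ 2 := by
        refine intervalIntegral.integral_congr fun u hu => ?_
        rw [uIcc_of_le hs.1] at hu
        rw [pT, hc, exp_two_mul_sub_log (hD u (hsub hu))]
    _ = pA φ s / (1 + c * pA φ s) := by
        rw [integral_div_one_add_mul_sq hs.1 ((continuousOn_pA ht.le hφ).mono hsub)
          ((continuousOn_exp_two_mul hφ).mono hsub)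
          (fun x hx => hasDerivAt_pA hφ ⟨hx.1, hx.2.trans_le hs.2⟩)
          (fun u hu => (hD u (hsub hu)).ne'), pA_zero]
        simp
    _ = pA φ s / (1 + pA φ s / pA φ t * (exp z - 1)) := by rw [hc]

theorem pT_pT (ht : 0 < t) (hφ : ContinuousOn φ (Icc 0 t)) (z z' : ℝ) {s : ℝ}
    (hs : s ∈ Icc 0 t) : pT t z (pT t z' φ) s = pT t (z + z') φ s := by
  have hAt := pA_pos ht hφ
  have hD := one_add_div_pA_mul_pos ht hφ hs
  have hAt' : pA (pT t z' φ) t = pA φ t / exp z' := by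
    rw [pA_pT ht hφ z' (right_mem_Icc.2 ht.le), div_self hAt.ne', one_mul, add_sub_cancel]
  have hratio : 1 + pA (pT t z' φ) s / pA (pT t z' φ) t * (exp z - 1)
      = (1 + pA φ s / pA φ t * (exp (z + z') - 1)) / (1 + pA φ s / pA φ t * (exp z' - 1)) := by
    have : pA φ t + pA φ s * (exp z' - 1) ≠ 0 := by
      have := mul_pos hAt (hD z')
      rw [mul_add, mul_one, ← mul_assoc, mul_div_cancel₀ _ hAt.ne'] at this
      exact this.ne'
    rw [pA_pT ht hφ z' hs, hAt', exp_add]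
    field_simp
    ring
  rw [pT, pT, hratio, log_div (hD (z + z')).ne' (hD z').ne', pT]
  ring

end pA

/-- Semigroup property: `T_z ∘ T_{z'} = T_{z+z'}` as maps on `C([0,t];ℝ)`; in particular
`T_z ∘ T_{-z} = T_0 = Id`. -/
theorem pT_comp_pT (t : ℝ) (ht : 0 < t) :
    (∀ z z' : ℝ, ∀ φ : ℝ → ℝ, ContinuousOn φ (Icc 0 t) →
      ∀ s ∈ Icc (0:ℝ) t, pT t z (pT t z' φ) s = pT t (z + z') φ s) ∧
    (∀ z : ℝ, ∀ φ : ℝ → ℝ, ContinuousOn φ (Icc 0 t) →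
      ∀ s ∈ Icc (0:ℝ) t, pT t z (pT t (-z) φ) s = φ s) ∧
    (∀ φ : ℝ → ℝ, ContinuousOn φ (Icc 0 t) →
      ∀ s ∈ Icc (0:ℝ) t, pT t 0 φ s = φ s) :=
  ⟨fun z z' _ hφ _ hs => pT_pT ht hφ z z' hs,
    fun z φ hφ s hs => by rw [pT_pT ht hφ z (-z) hs, add_neg_cancel, pT_zero],
    fun φ _ _ _ => by rw [pT_zero]⟩
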